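/- Suppose the embedded jump chain is recurrent. Let f ∈ Dom_+(Γ) be strictly positive with b := sup_{x∈𝕏} f(x) < ∞, and assume that for every a with 0 < a < b the sublevel set {f ≤ a} is finite. Let g : [0,b] → [0,∞) be increasing with B := ∫_0^b (1/g(y)) dy < ∞. If a ∈ (0,b) and Γf(x) ≤ −g(f(x)) for all x ∉ {f ≤ a}, then E_x(τ_{{f ≤ a}}) ≤ B for all x ∉ {f ≤ a}; in particular the chain implodes towards {f ≤ a}. -/

import Mathlib

open MeasureTheory Set Filter
open scoped Classical ENNReal NNReal

/-- A continuous-time Markov chain on a countably infinite state space `X`,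
described by its generator `Γ`, together with a probability space carrying,
for each starting point `x`, the embedded jump chain `jump` and the holding
times `hold` (with `hold n` the holding time at the `n`-th visited state). -/
structure CTMC where
  X : Type
  countX : Countable X
  infX : Infinite X
  Γ : X → X → ℝ
  γ : X → ℝ
  γ_pos : ∀ x, 0 < γ x
  Γ_offdiag_nonneg : ∀ x y, y ≠ x → 0 ≤ Γ x y
  Γ_diag : ∀ x, Γ x x = - γ x
  γ_sum : ∀ x, HasSum (fun y => if y = x then 0 else Γ x y) (γ x)
  /-- irreducibility of the embedded jump chain -/
  irr : ∀ x y : X, ∃ (n : ℕ) (path : ℕ → X), path 0 = x ∧ path n = y ∧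
    ∀ k, k < n → 0 < (if path (k+1) = path k then 0
      else Γ (path k) (path (k+1)) / γ (path k))
  Ω : Type
  measΩ : MeasurableSpace Ω
  μ : X → @Measure Ω measΩ
  probμ : ∀ x, @IsProbabilityMeasure Ω measΩ (μ x)
  jump : ℕ → Ω → X
  hold : ℕ → Ω → ℝ
  jump_meas : ∀ (n : ℕ) (x : X), MeasurableSet[measΩ] {ω | jump n ω = x}
  hold_meas : ∀ n : ℕ, @Measurable Ω ℝ measΩ _ (hold n)
  hold_pos : ∀ n ω, 0 < hold n ω
  /-- under `μ x` the chain starts at `x` -/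
  start : ∀ x : X, μ x {ω | jump 0 ω = x} = 1
  /-- finite-dimensional law: the embedded chain is Markov with transition
  probabilities `P x y = Γ x y / γ x` (for `y ≠ x`), and conditionally on the
  embedded chain the holding times are independent exponentials of rates
  `γ (jump n)` -/
  law : ∀ (x : X) (n : ℕ) (path : ℕ → X) (t : ℕ → ℝ), path 0 = x → (∀ k, 0 ≤ t k) →
    μ x {ω | (∀ k, k ≤ n → jump k ω = path k) ∧ (∀ k, k < n → t k < hold k ω)}
      = ENNReal.ofReal (∏ k ∈ Finset.range n,
          ((if path (k+1) = path k then 0 else Γ (path k) (path (k+1)) / γ (path k))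
            * Real.exp (-(γ (path k)) * t k)))

namespace CTMC

attribute [instance] CTMC.countX CTMC.infX CTMC.measΩ CTMC.probμ

variable (M : CTMC)

/-- embedded chain transition probabilities -/
noncomputable def P (x y : M.X) : ℝ := if y = x then 0 else M.Γ x y / M.γ x

/-- jump times -/
noncomputable def J (n : ℕ) (ω : M.Ω) : ℝ := ∑ k ∈ Finset.range n, M.hold k ω

/-- explosion (life) time -/
noncomputable def zeta (ω : M.Ω) : ℝ≥0∞ := ⨆ n, ENNReal.ofReal (M.J n ω)

/-- the continuous-time chain: `pos t ω = some (jump n ω)` if `J n ≤ t < J (n+1)`,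
and `none` (the cemetery state `∂`) after the explosion time. -/
noncomputable def pos (t : ℝ) (ω : M.Ω) : Option M.X :=
  if h : ∃ n, M.J n ω ≤ t ∧ t < M.J (n+1) ω then some (M.jump h.choose ω) else none

/-- passage time: `τ_A = inf {t ≥ 0 : ξ_t ∈ A}` -/
noncomputable def tau (A : Set M.X) (ω : M.Ω) : ℝ≥0∞ :=
  sInf (ENNReal.ofReal '' {s : ℝ | 0 ≤ s ∧ ∃ a ∈ A, M.pos s ω = some a})

/-- `f` belongs to the domain of the generator -/
def InDom (f : M.X → ℝ) : Prop :=
  ∀ x : M.X, Summable (fun y => if y = x then 0 else M.Γ x y * f y)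

/-- `f ∈ Dom_+(Γ)` -/
def InDomPos (f : M.X → ℝ) : Prop := (∀ x, 0 ≤ f x) ∧ M.InDom f

/-- action of the generator : `Γ f (x) = ∑_y Γ_{xy} f(y)` -/
noncomputable def gen (f : M.X → ℝ) (x : M.X) : ℝ :=
  (∑' y, if y = x then 0 else M.Γ x y * f y) - M.γ x * f x

/-- recurrence of the embedded jump chain -/
def JumpRecurrent : Prop := ∀ x : M.X, M.μ x {ω | ∃ n, 1 ≤ n ∧ M.jump n ω = x} = 1

/-- `f → ∞` : all sublevel sets are finite -/
def FinSublevels (f : M.X → ℝ) : Prop := ∀ r : ℝ, {x : M.X | f x ≤ r}.Finite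

end CTMC

/-!
Let `h y = ∫_{(0, f y]} dv / g v ≤ B`. Since `g` increases, `u ↦ ∫_0^u dv / g v` is concave, and
its tangent-line inequality combined with the drift condition `Pf - f = Γf / γ ≤ -g(f) / γ` gives
`P h + 1 / γ ≤ h` outside `A = {f ≤ a}`. Hence, for the jump chain stopped on entering `A`,
`E_x[h(ξ̃_n)] + ∑_{k<n} E_x[1 / γ(ξ̃_k)]` decreases in `n`, and the expected total holding time
before `A` is at most `h x ≤ B`. This total bounds `τ_A` as soon as `A` is reached almost surely,
which follows from recurrence: the chain returns to `x` infinitely often, while by Borel–Cantelli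
it is only finitely often at `x` without having visited `A`.
-/

open scoped Topology

theorem lintegral_comp_mul_eq_tsum {Ω α : Type*} [MeasurableSpace Ω] [MeasurableSpace α]
    [Countable α] [MeasurableSingletonClass α] {μ : Measure Ω} {V : Ω → α} (hV : Measurable V)
    (Φ : α → ℝ≥0∞) {G : Ω → ℝ≥0∞} (hG : Measurable G) :
    ∫⁻ ω, Φ (V ω) * G ω ∂μ = ∑' a, Φ a * ∫⁻ ω in V ⁻¹' {a}, G ω ∂μ := by
  have hfib : ∀ a, MeasurableSet (V ⁻¹' {a}) := fun a => hV (measurableSet_singleton a)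
  have hdisj : Pairwise (Function.onFun Disjoint fun a => V ⁻¹' {a}) := fun a b hab =>
    (disjoint_singleton.2 hab).preimage V
  rw [← setLIntegral_univ, ← preimage_univ (f := V), ← iUnion_of_singleton α, preimage_iUnion,
    lintegral_iUnion hfib hdisj]
  refine tsum_congr fun a => ?_
  rw [← lintegral_const_mul _ hG]
  exact setLIntegral_congr_fun (hfib a) fun ω hω => by rw [show V ω = a from hω]

theorem lintegral_comp_eq_tsum {Ω α : Type*} [MeasurableSpace Ω] [MeasurableSpace α]
    [Countable α] [MeasurableSingletonClass α] {μ : Measure Ω} {V : Ω → α} (hV : Measurable V)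
    (Φ : α → ℝ≥0∞) :
    ∫⁻ ω, Φ (V ω) ∂μ = ∑' a, Φ a * μ (V ⁻¹' {a}) := by
  simpa using lintegral_comp_mul_eq_tsum hV Φ measurable_one (μ := μ)

theorem lintegral_ofReal_exp_neg_mul_Ioi {c : ℝ} (hc : 0 < c) :
    ∫⁻ t in Ioi (0:ℝ), ENNReal.ofReal (Real.exp (-c * t)) = ENNReal.ofReal c⁻¹ := by
  rw [← ofReal_integral_eq_lintegral_ofReal (exp_neg_integrableOn_Ioi 0 hc)
    (Eventually.of_forall fun t => (Real.exp_pos _).le)]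
  have := integral_comp_mul_left_Ioi (fun u => Real.exp (-u)) 0 hc
  simp only [mul_zero, integral_exp_neg_Ioi, neg_zero, Real.exp_zero, smul_eq_mul, mul_one] at this
  simp_rw [neg_mul, this]

noncomputable def invPrimitive (G : ℝ → ℝ) (u : ℝ) : ℝ≥0∞ :=
  ∫⁻ v in Ioc 0 u, (ENNReal.ofReal (G v))⁻¹

theorem invPrimitive_eq_add (G : ℝ → ℝ) {u v : ℝ} (hu : 0 ≤ u) (huv : u ≤ v) :
    invPrimitive G v = invPrimitive G u + ∫⁻ w in Ioc u v, (ENNReal.ofReal (G w))⁻¹ := by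
  rw [invPrimitive, invPrimitive, ← Ioc_union_Ioc_eq_Ioc hu huv,
    lintegral_union measurableSet_Ioc (Ioc_disjoint_Ioc_of_le le_rfl)]

theorem setLIntegral_Ioc_inv_ofReal_const {c : ℝ} (hc : 0 < c) (u v : ℝ) :
    ∫⁻ _ in Ioc u v, (ENNReal.ofReal c)⁻¹ = ENNReal.ofReal ((v - u) / c) := by
  rw [setLIntegral_const, Real.volume_Ioc, ENNReal.ofReal_div_of_pos hc, ENNReal.div_eq_inv_mul]

/-- The tangent-line inequality at `s` for the concave function `invPrimitive G` (its derivative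
`1 / G` decreases), with both sides shifted so that no subtraction occurs in `ℝ≥0∞`. -/
theorem invPrimitive_add_le {G : ℝ → ℝ} {b s t : ℝ} (hG : MonotoneOn G (Icc 0 b))
    (hs : s ∈ Icc 0 b) (ht : t ∈ Icc 0 b) (hGs : 0 < G s) :
    invPrimitive G t + ENNReal.ofReal (s / G s) ≤ invPrimitive G s + ENNReal.ofReal (t / G s) := by
  have hsplit : ∀ u v, (u - v) / G s + v / G s = u / G s := fun u v => by ring
  rcases le_total t s with hts | hst
  · have hD : ENNReal.ofReal ((s - t) / G s) ≤ ∫⁻ w in Ioc t s, (ENNReal.ofReal (G w))⁻¹ := by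
      rw [← setLIntegral_Ioc_inv_ofReal_const hGs]
      refine setLIntegral_mono' measurableSet_Ioc fun w hw => ?_
      have hw' : w ∈ Icc 0 b := ⟨ht.1.trans hw.1.le, hw.2.trans hs.2⟩
      exact ENNReal.inv_le_inv' (ENNReal.ofReal_le_ofReal (hG hw' hs hw.2))
    calc invPrimitive G t + ENNReal.ofReal (s / G s)
        = invPrimitive G t + ENNReal.ofReal ((s - t) / G s) + ENNReal.ofReal (t / G s) := by
          rw [add_assoc, ← ENNReal.ofReal_add (div_nonneg (by linarith) hGs.le)
            (div_nonneg ht.1 hGs.le), hsplit]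
      _ ≤ invPrimitive G s + ENNReal.ofReal (t / G s) := by
          rw [invPrimitive_eq_add G ht.1 hts]
          gcongr
  · have hD : ∫⁻ w in Ioc s t, (ENNReal.ofReal (G w))⁻¹ ≤ ENNReal.ofReal ((t - s) / G s) := by
      rw [← setLIntegral_Ioc_inv_ofReal_const hGs]
      refine setLIntegral_mono' measurableSet_Ioc fun w hw => ?_
      have hw' : w ∈ Icc 0 b := ⟨hs.1.trans hw.1.le, hw.2.trans ht.2⟩
      exact ENNReal.inv_le_inv' (ENNReal.ofReal_le_ofReal (hG hs hw' hw.1.le))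
    calc invPrimitive G t + ENNReal.ofReal (s / G s)
        ≤ invPrimitive G s + ENNReal.ofReal ((t - s) / G s) + ENNReal.ofReal (s / G s) := by
          rw [invPrimitive_eq_add G hs.1 hst]
          gcongr
      _ = invPrimitive G s + ENNReal.ofReal (t / G s) := by
          rw [add_assoc, ← ENNReal.ofReal_add (div_nonneg (by linarith) hGs.le)
            (div_nonneg hs.1 hGs.le), hsplit]

theorem pos_of_invPrimitive_ne_top {G : ℝ → ℝ} {a b : ℝ} (hG : MonotoneOn G (Icc 0 b))
    (ha : 0 < a) (hab : a ≤ b) (hfin : invPrimitive G b ≠ ⊤) : 0 < G a := by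
  by_contra! hGa
  have htop : ∀ w ∈ Ioc 0 a, (ENNReal.ofReal (G w))⁻¹ = ⊤ := fun w hw => by
    rw [ENNReal.ofReal_of_nonpos ((hG ⟨hw.1.le, hw.2.trans hab⟩ ⟨ha.le, hab⟩ hw.2).trans hGa),
      ENNReal.inv_zero]
  refine hfin (top_unique ?_)
  calc ⊤ = invPrimitive G a := by
        rw [invPrimitive, setLIntegral_congr_fun measurableSet_Ioc htop, setLIntegral_const,
          Real.volume_Ioc, ENNReal.top_mul (by simpa using ha)]
    _ ≤ invPrimitive G b := lintegral_mono_set (Ioc_subset_Ioc_right hab)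

namespace CTMC

variable (M : CTMC)

instance : MeasurableSpace M.X := ⊤

instance : MeasurableSingletonClass M.X := ⟨fun _ => trivial⟩

theorem measurable_jump (n : ℕ) : Measurable (M.jump n) :=
  measurable_to_countable' (M.jump_meas n)

def path (n : ℕ) (ω : M.Ω) : Fin (n + 1) → M.X := fun k => M.jump k ω

theorem measurable_path (n : ℕ) : Measurable (M.path n) :=
  measurable_pi_lambda _ fun k => M.measurable_jump k

theorem ae_jump_zero (x : M.X) : ∀ᵐ ω ∂M.μ x, M.jump 0 ω = x := by
  rw [ae_iff_measure_eq (M.jump_meas 0 x).nullMeasurableSet, M.start, measure_univ]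

theorem P_nonneg (z y : M.X) : 0 ≤ M.P z y := by
  unfold P
  split_ifs with h
  · exact le_rfl
  · exact div_nonneg (M.Γ_offdiag_nonneg z y h) (M.γ_pos z).le

theorem P_mul_eq (f : M.X → ℝ) (z y : M.X) :
    M.P z y * f y = (if y = z then 0 else M.Γ z y * f y) / M.γ z := by
  unfold P
  split_ifs <;> ring

theorem hasSum_P (z : M.X) : HasSum (M.P z) 1 := by
  have h := (M.γ_sum z).div_const (M.γ z)
  rw [div_self (M.γ_pos z).ne'] at h
  have e : (fun y => (if y = z then 0 else M.Γ z y) / M.γ z) = M.P z :=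
    funext fun y => by simpa using (M.P_mul_eq 1 z y).symm
  rwa [e] at h

theorem tsum_ofReal_P (z : M.X) : ∑' y, ENNReal.ofReal (M.P z y) = 1 := by
  rw [← ENNReal.ofReal_tsum_of_nonneg (M.P_nonneg z) (M.hasSum_P z).summable,
    (M.hasSum_P z).tsum_eq, ENNReal.ofReal_one]

theorem summable_P_mul {f : M.X → ℝ} (hf : M.InDom f) (z : M.X) :
    Summable fun y => M.P z y * f y := by
  simpa only [M.P_mul_eq] using (hf z).div_const (M.γ z)

theorem tsum_P_mul (f : M.X → ℝ) (z : M.X) :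
    ∑' y, M.P z y * f y = f z + M.gen f z / M.γ z := by
  simp only [M.P_mul_eq, tsum_div_const, gen]
  field_simp [(M.γ_pos z).ne']
  ring

noncomputable def transOp (ψ : M.X → ℝ≥0∞) (z : M.X) : ℝ≥0∞ :=
  ∑' y, ENNReal.ofReal (M.P z y) * ψ y

theorem transOp_mono {ψ ψ' : M.X → ℝ≥0∞} (hψ : ψ ≤ ψ') : M.transOp ψ ≤ M.transOp ψ' :=
  fun z => ENNReal.tsum_le_tsum fun y => by gcongr; exact hψ y

theorem transOp_add_const (ψ : M.X → ℝ≥0∞) (c : ℝ≥0∞) (z : M.X) :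
    M.transOp (fun y => ψ y + c) z = M.transOp ψ z + c := by
  simp only [transOp, mul_add, ENNReal.tsum_add, ENNReal.tsum_mul_right, M.tsum_ofReal_P, one_mul]

theorem transOp_const_add (c : ℝ≥0∞) (ψ : M.X → ℝ≥0∞) (z : M.X) :
    M.transOp (fun y => c + ψ y) z = c + M.transOp ψ z := by
  simp only [add_comm c, transOp_add_const]

theorem measure_path_preimage_eq_zero {x : M.X} {n : ℕ} {q : Fin (n + 1) → M.X} (hq : q 0 ≠ x) :
    M.μ x (M.path n ⁻¹' {q}) = 0 :=
  measure_mono_null (fun ω (hω : M.path n ω = q) (h0 : M.jump 0 ω = x) =>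
    hq (h0 ▸ (congrFun hω 0).symm)) (ae_iff.1 (M.ae_jump_zero x))

theorem path_preimage_eq_setOf {n : ℕ} {q : Fin (n + 1) → M.X} {p : ℕ → M.X}
    (hpq : ∀ k : Fin (n + 1), p k = q k) :
    M.path n ⁻¹' {q} = {ω | ∀ k ≤ n, M.jump k ω = p k} := by
  ext ω
  refine funext_iff.trans ⟨fun h k hk => ?_, fun h k => ?_⟩
  · simpa [path, ← hpq] using h ⟨k, Nat.lt_succ_of_le hk⟩
  · simpa [path, hpq] using h k (Fin.is_le k)

theorem measure_path_preimage_inter_jump_hold (x : M.X) (n : ℕ) (q : Fin (n + 1) → M.X)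
    (y : M.X) {t : ℝ} (ht : 0 ≤ t) :
    M.μ x (M.path n ⁻¹' {q} ∩ {ω | M.jump (n + 1) ω = y} ∩ {ω | t < M.hold n ω})
      = M.μ x (M.path n ⁻¹' {q}) *
          ENNReal.ofReal (M.P (q (Fin.last n)) y * Real.exp (-M.γ (q (Fin.last n)) * t)) := by
  by_cases hq : q 0 = x
  swap
  · rw [M.measure_path_preimage_eq_zero hq, zero_mul]
    exact measure_mono_null (inter_subset_left.trans inter_subset_left)
      (M.measure_path_preimage_eq_zero hq)
  set p : ℕ → M.X := fun k => if h : k < n + 1 then q ⟨k, h⟩ else y with hp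
  have hpq : ∀ k : Fin (n + 1), p k = q k := fun k => dif_pos k.is_lt
  have hfib : M.path n ⁻¹' {q}
      = {ω | (∀ k, k ≤ n → M.jump k ω = p k) ∧ ∀ k, k < n → (0:ℝ) < M.hold k ω} := by
    simp [M.path_preimage_eq_setOf hpq, M.hold_pos]
  have hfib' : M.path n ⁻¹' {q} ∩ {ω | M.jump (n + 1) ω = y} ∩ {ω | t < M.hold n ω}
      = {ω | (∀ k, k ≤ n + 1 → M.jump k ω = p k) ∧
          ∀ k, k < n + 1 → (if k = n then t else 0) < M.hold k ω} := by
    have hpy : p (n + 1) = y := by simp [hp]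
    ext ω
    simp only [M.path_preimage_eq_setOf hpq, mem_inter_iff, mem_ofPred_eq]
    constructor
    · rintro ⟨⟨hjump, hy⟩, hhold⟩
      refine ⟨fun k hk => ?_, fun k hk => ?_⟩
      · rcases Nat.of_le_succ hk with hk | rfl
        · exact hjump k hk
        · rw [hy, hpy]
      · split_ifs with hkn
        · exact hkn ▸ hhold
        · exact M.hold_pos k ω
    · rintro ⟨hjump, hhold⟩
      exact ⟨⟨fun k hk => hjump k (by omega), by rw [hjump (n + 1) le_rfl, hpy]⟩,
        by simpa using hhold n (by omega)⟩
  have hp0 : p 0 = x := by simp [hp, hq]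
  have hnonneg : ∀ k, 0 ≤ if k = n then t else 0 := fun k => by split_ifs <;> simp [ht]
  rw [hfib', hfib, M.law x (n + 1) p _ hp0 hnonneg, M.law x n p (fun _ => 0) hp0 fun _ => le_rfl,
    Finset.prod_range_succ, ENNReal.ofReal_mul]
  · congr 2
    · refine Finset.prod_congr rfl fun k hk => ?_
      rw [if_neg (Finset.mem_range.1 hk).ne]
    · simp [hp, P, Fin.last]
  · exact Finset.prod_nonneg fun k _ => mul_nonneg (M.P_nonneg _ _) (Real.exp_pos _).le

theorem measure_path_preimage_inter_jump (x : M.X) (n : ℕ) (q : Fin (n + 1) → M.X) (y : M.X) :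
    M.μ x (M.path n ⁻¹' {q} ∩ {ω | M.jump (n + 1) ω = y})
      = M.μ x (M.path n ⁻¹' {q}) * ENNReal.ofReal (M.P (q (Fin.last n)) y) := by
  have hhold : {ω | (0:ℝ) < M.hold n ω} = univ := eq_univ_of_forall fun ω => M.hold_pos n ω
  simpa [hhold] using M.measure_path_preimage_inter_jump_hold x n q y le_rfl

theorem measure_path_preimage_inter_hold (x : M.X) (n : ℕ) (q : Fin (n + 1) → M.X) {t : ℝ}
    (ht : 0 ≤ t) :
    M.μ x (M.path n ⁻¹' {q} ∩ {ω | t < M.hold n ω})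
      = M.μ x (M.path n ⁻¹' {q}) * ENNReal.ofReal (Real.exp (-M.γ (q (Fin.last n)) * t)) := by
  set S := M.path n ⁻¹' {q} ∩ {ω | t < M.hold n ω}
  have hS : M.μ x S = ∑' y, M.μ x (M.path n ⁻¹' {q} ∩ {ω | M.jump (n + 1) ω = y} ∩
      {ω | t < M.hold n ω}) := by
    have h := lintegral_comp_eq_tsum (μ := (M.μ x).restrict S) (M.measurable_jump (n + 1)) 1
    simp only [Pi.one_apply, lintegral_one, Measure.restrict_apply_univ, one_mul,
      Measure.restrict_apply (M.measurable_jump (n + 1) (measurableSet_singleton _))] at h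
    refine h.trans (tsum_congr fun y => congrArg _ ?_)
    ext ω
    simp only [S, mem_inter_iff, mem_preimage, mem_singleton_iff, mem_ofPred_eq]
    tauto
  simp_rw [hS, M.measure_path_preimage_inter_jump_hold x n q _ ht, ENNReal.ofReal_mul
    (M.P_nonneg _ _), ← mul_assoc, ENNReal.tsum_mul_right, ENNReal.tsum_mul_left, M.tsum_ofReal_P,
    mul_one]

theorem measurable_comp_jump {β : Type*} [MeasurableSpace β] (ψ : M.X → β) (n : ℕ) :
    Measurable fun ω => ψ (M.jump n ω) :=
  Measurable.of_discrete.comp (M.measurable_jump n)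

theorem jump_eq_of_mem_path_preimage {n : ℕ} {q : Fin (n + 1) → M.X} {ω : M.Ω}
    (hω : ω ∈ M.path n ⁻¹' {q}) : M.jump n ω = q (Fin.last n) :=
  congrFun hω (Fin.last n)

theorem setLIntegral_path_preimage_jump_succ (x : M.X) (n : ℕ) (q : Fin (n + 1) → M.X)
    (ψ : M.X → ℝ≥0∞) :
    ∫⁻ ω in M.path n ⁻¹' {q}, ψ (M.jump (n + 1) ω) ∂M.μ x
      = M.μ x (M.path n ⁻¹' {q}) * M.transOp ψ (q (Fin.last n)) := by
  rw [lintegral_comp_eq_tsum (M.measurable_jump (n + 1)), transOp, ← ENNReal.tsum_mul_left]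
  refine tsum_congr fun y => ?_
  rw [Measure.restrict_apply (M.measurable_jump _ (measurableSet_singleton y)), inter_comm]
  erw [M.measure_path_preimage_inter_jump]
  ring

theorem setLIntegral_path_preimage_hold (x : M.X) (n : ℕ) (q : Fin (n + 1) → M.X) :
    ∫⁻ ω in M.path n ⁻¹' {q}, ENNReal.ofReal (M.hold n ω) ∂M.μ x
      = M.μ x (M.path n ⁻¹' {q}) * (ENNReal.ofReal (M.γ (q (Fin.last n))))⁻¹ := by
  have hγ := M.γ_pos (q (Fin.last n))
  rw [lintegral_eq_lintegral_meas_lt _ (ae_of_all _ fun ω => (M.hold_pos n ω).le)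
    (M.hold_meas n).aemeasurable]
  rw [setLIntegral_congr_fun measurableSet_Ioi fun t ht => by
    rw [Measure.restrict_apply (measurableSet_lt measurable_const (M.hold_meas n)), inter_comm,
      M.measure_path_preimage_inter_hold x n q (le_of_lt ht)]]
  rw [lintegral_const_mul _ (by fun_prop), lintegral_ofReal_exp_neg_mul_Ioi hγ,
    ENNReal.ofReal_inv_of_pos hγ]

theorem lintegral_path_mul_jump_succ (x : M.X) (n : ℕ) (Φ : (Fin (n + 1) → M.X) → ℝ≥0∞)
    (ψ : M.X → ℝ≥0∞) :
    ∫⁻ ω, Φ (M.path n ω) * ψ (M.jump (n + 1) ω) ∂M.μ x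
      = ∫⁻ ω, Φ (M.path n ω) * M.transOp ψ (M.jump n ω) ∂M.μ x := by
  rw [lintegral_comp_mul_eq_tsum (M.measurable_path n) Φ (M.measurable_comp_jump _ _),
    lintegral_comp_mul_eq_tsum (M.measurable_path n) Φ (M.measurable_comp_jump _ _)]
  refine tsum_congr fun q => ?_
  rw [setLIntegral_path_preimage_jump_succ, setLIntegral_congr_fun
    (M.measurable_path n (measurableSet_singleton q))
    fun ω hω => by rw [M.jump_eq_of_mem_path_preimage hω], setLIntegral_const, mul_comm (M.μ x _)]

theorem lintegral_path_mul_hold (x : M.X) (n : ℕ) (Φ : (Fin (n + 1) → M.X) → ℝ≥0∞) :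
    ∫⁻ ω, Φ (M.path n ω) * ENNReal.ofReal (M.hold n ω) ∂M.μ x
      = ∫⁻ ω, Φ (M.path n ω) * (ENNReal.ofReal (M.γ (M.jump n ω)))⁻¹ ∂M.μ x := by
  rw [lintegral_comp_mul_eq_tsum (M.measurable_path n) Φ (M.hold_meas n).ennreal_ofReal,
    lintegral_comp_mul_eq_tsum (M.measurable_path n) Φ
      (M.measurable_comp_jump (fun z => (ENNReal.ofReal (M.γ z))⁻¹) n)]
  refine tsum_congr fun q => ?_
  rw [setLIntegral_path_preimage_hold, setLIntegral_congr_fun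
    (M.measurable_path n (measurableSet_singleton q))
    fun ω hω => by rw [M.jump_eq_of_mem_path_preimage hω], setLIntegral_const, mul_comm (M.μ x _)]

def avoidsAfter (x : M.X) (m l : ℕ) : Set M.Ω := {ω | ∀ j < l, M.jump (m + j + 1) ω ≠ x}

/-- `avoidProb x l z` is the probability that the embedded chain started at `z` avoids `x` at
steps `1, …, l`. -/
noncomputable def avoidProb (x : M.X) : ℕ → M.X → ℝ≥0∞
  | 0 => 1
  | l + 1 => M.transOp (({x}ᶜ : Set M.X).indicator (avoidProb x l))

theorem measurableSet_avoidsAfter (x : M.X) (m l : ℕ) : MeasurableSet (M.avoidsAfter x m l) := by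
  simp only [avoidsAfter, ofPred_forall]
  exact MeasurableSet.iInter fun j => MeasurableSet.iInter fun _ =>
    (M.jump_meas (m + j + 1) x).compl

theorem avoidsAfter_succ (x : M.X) (m l : ℕ) :
    M.avoidsAfter x m (l + 1) = {ω | M.jump (m + 1) ω ≠ x} ∩ M.avoidsAfter x (m + 1) l := by
  ext ω
  simp only [avoidsAfter, mem_inter_iff, mem_ofPred_eq]
  constructor
  · intro h
    exact ⟨h 0 (by omega), fun j hj => by simpa [add_assoc, add_comm 1] using h (j + 1) (by omega)⟩
  · rintro ⟨h0, h⟩ j hj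
    rcases j with _ | j
    · exact h0
    · simpa [add_assoc, add_comm 1] using h j (by omega)

theorem lintegral_path_mul_indicator_avoidsAfter (x₀ x : M.X) (l m : ℕ)
    (Φ : (Fin (m + 1) → M.X) → ℝ≥0∞) :
    ∫⁻ ω, Φ (M.path m ω) * (M.avoidsAfter x m l).indicator 1 ω ∂M.μ x₀
      = ∫⁻ ω, Φ (M.path m ω) * M.avoidProb x l (M.jump m ω) ∂M.μ x₀ := by
  induction l generalizing m with
  | zero => simp [avoidsAfter, avoidProb]
  | succ l ih =>
    calc ∫⁻ ω, Φ (M.path m ω) * (M.avoidsAfter x m (l + 1)).indicator 1 ω ∂M.μ x₀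
        = ∫⁻ ω, (Φ (Fin.init (M.path (m + 1) ω)) * ({x}ᶜ : Set M.X).indicator 1 (M.jump (m + 1) ω))
            * (M.avoidsAfter x (m + 1) l).indicator 1 ω ∂M.μ x₀ := by
          refine lintegral_congr fun ω => ?_
          rw [avoidsAfter_succ, inter_indicator_one, Pi.mul_apply, mul_assoc]
          rfl
      _ = ∫⁻ ω, (Φ (Fin.init (M.path (m + 1) ω)) * ({x}ᶜ : Set M.X).indicator 1 (M.jump (m + 1) ω))
            * M.avoidProb x l (M.jump (m + 1) ω) ∂M.μ x₀ :=
          ih (m + 1) fun q => Φ (Fin.init q) * ({x}ᶜ : Set M.X).indicator 1 (q (Fin.last (m + 1)))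
      _ = ∫⁻ ω, Φ (M.path m ω) * ({x}ᶜ : Set M.X).indicator (M.avoidProb x l) (M.jump (m + 1) ω)
            ∂M.μ x₀ := by
          refine lintegral_congr fun ω => ?_
          by_cases hω : M.jump (m + 1) ω = x
          · simp [hω]
          · simp only [mem_compl_iff, mem_singleton_iff, hω, not_false_eq_true,
              indicator_of_mem, Pi.one_apply, mul_one]
            rfl
      _ = ∫⁻ ω, Φ (M.path m ω) * M.avoidProb x (l + 1) (M.jump m ω) ∂M.μ x₀ :=
          M.lintegral_path_mul_jump_succ x₀ m Φ _

theorem measure_avoidsAfter_zero (x : M.X) (l : ℕ) :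
    M.μ x (M.avoidsAfter x 0 l) = M.avoidProb x l x := by
  have h := M.lintegral_path_mul_indicator_avoidsAfter x x l 0 1
  simp only [Pi.one_apply, one_mul, lintegral_indicator_one (M.measurableSet_avoidsAfter x 0 l)]
    at h
  rw [h, lintegral_congr_ae ((M.ae_jump_zero x).mono fun ω hω => by rw [hω]), lintegral_const,
    measure_univ, mul_one]

theorem measure_jump_eq_inter_avoidsAfter_le (x : M.X) (m l : ℕ) :
    M.μ x ({ω | M.jump m ω = x} ∩ M.avoidsAfter x m l) ≤ M.avoidProb x l x := by
  have h := M.lintegral_path_mul_indicator_avoidsAfter x x l m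
    fun q => ({q | q (Fin.last m) = x} : Set (Fin (m + 1) → M.X)).indicator 1 q
  calc M.μ x ({ω | M.jump m ω = x} ∩ M.avoidsAfter x m l)
      = ∫⁻ ω, ({ω | M.jump m ω = x} ∩ M.avoidsAfter x m l).indicator 1 ω ∂M.μ x :=
        (lintegral_indicator_one ((M.jump_meas m x).inter (M.measurableSet_avoidsAfter x m l))).symm
    _ = ∫⁻ ω, ({q | q (Fin.last m) = x} : Set (Fin (m + 1) → M.X)).indicator 1 (M.path m ω)
          * M.avoidProb x l (M.jump m ω) ∂M.μ x := by
        rw [← h, inter_indicator_one]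
        rfl
    _ ≤ ∫⁻ _, M.avoidProb x l x ∂M.μ x := by
        refine lintegral_mono fun ω => ?_
        by_cases hω : M.jump m ω = x <;> simp [indicator, path, hω]
    _ = M.avoidProb x l x := by rw [lintegral_const, measure_univ, mul_one]

theorem tendsto_avoidProb (x : M.X)
    (hx : M.μ x {ω | ∃ n, 1 ≤ n ∧ M.jump n ω = x} = 1) :
    Tendsto (fun l => M.avoidProb x l x) atTop (𝓝 0) := by
  have hanti : Antitone (M.avoidsAfter x 0) := fun l l' hll' ω hω j hj => hω j (hj.trans_le hll')
  have hnull : M.μ x (⋂ l, M.avoidsAfter x 0 l) = 0 := by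
    refine measure_mono_null (t := {ω | ∃ n, 1 ≤ n ∧ M.jump n ω = x}ᶜ) ?_ ?_
    · rintro ω hω ⟨n, hn, hjump⟩
      obtain ⟨j, rfl⟩ := Nat.exists_eq_add_of_le' hn
      exact mem_iInter.1 hω (j + 1) j (by omega) (by simpa [add_comm] using hjump)
    · have hmeas : MeasurableSet {ω | ∃ n, 1 ≤ n ∧ M.jump n ω = x} := by
        simp only [ofPred_exists]
        exact MeasurableSet.iUnion fun n => MeasurableSet.const _ |>.inter (M.jump_meas n x)
      exact (prob_compl_eq_zero_iff hmeas).2 hx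
  have h := tendsto_measure_iInter_atTop
    (fun l => (M.measurableSet_avoidsAfter x 0 l).nullMeasurableSet) hanti
    ⟨0, measure_ne_top (M.μ x) _⟩
  simpa only [hnull, Function.comp_def, M.measure_avoidsAfter_zero x] using h

theorem ae_exists_jump_eq_of_jump_eq (x : M.X)
    (hx : M.μ x {ω | ∃ n, 1 ≤ n ∧ M.jump n ω = x} = 1) (m : ℕ) :
    ∀ᵐ ω ∂M.μ x, M.jump m ω = x → ∃ n > m, M.jump n ω = x := by
  refine ae_iff.2 (le_antisymm (ge_of_tendsto' (M.tendsto_avoidProb x hx) fun l => ?_) bot_le)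
  refine (measure_mono fun ω hω => ?_).trans (M.measure_jump_eq_inter_avoidsAfter_le x m l)
  push Not at hω
  exact ⟨hω.1, fun j _ => hω.2 (m + j + 1) (by omega)⟩

theorem ae_frequently_jump_eq (x : M.X)
    (hx : M.μ x {ω | ∃ n, 1 ≤ n ∧ M.jump n ω = x} = 1) :
    ∀ᵐ ω ∂M.μ x, ∃ᶠ n in atTop, M.jump n ω = x := by
  filter_upwards [M.ae_jump_zero x, ae_all_iff.2 (M.ae_exists_jump_eq_of_jump_eq x hx)]
    with ω h0 hnext
  refine frequently_atTop.2 fun N => ?_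
  induction N with
  | zero => exact ⟨0, le_rfl, h0⟩
  | succ N ih =>
    obtain ⟨n, hn, hjump⟩ := ih
    obtain ⟨k, hk, hk'⟩ := hnext n hjump
    exact ⟨k, by omega, hk'⟩

theorem J_succ (n : ℕ) (ω : M.Ω) : M.J (n + 1) ω = M.J n ω + M.hold n ω :=
  Finset.sum_range_succ _ _

theorem J_nonneg (n : ℕ) (ω : M.Ω) : 0 ≤ M.J n ω :=
  Finset.sum_nonneg fun k _ => (M.hold_pos k ω).le

theorem strictMono_J (ω : M.Ω) : StrictMono fun n => M.J n ω :=
  strictMono_nat_of_lt_succ fun n => by rw [J_succ]; linarith [M.hold_pos n ω]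

theorem pos_J (n : ℕ) (ω : M.Ω) : M.pos (M.J n ω) ω = some (M.jump n ω) := by
  have hex : ∃ k, M.J k ω ≤ M.J n ω ∧ M.J n ω < M.J (k + 1) ω :=
    ⟨n, le_rfl, M.strictMono_J ω (Nat.lt_succ_self n)⟩
  obtain ⟨h1, h2⟩ := hex.choose_spec
  rw [(M.strictMono_J ω).le_iff_le] at h1
  rw [(M.strictMono_J ω).lt_iff_lt] at h2
  rw [pos, dif_pos hex, show hex.choose = n by omega]

theorem tau_le_J (A : Set M.X) {n : ℕ} {ω : M.Ω} (hn : M.jump n ω ∈ A) :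
    M.tau A ω ≤ ENNReal.ofReal (M.J n ω) :=
  sInf_le ⟨M.J n ω, ⟨M.J_nonneg n ω, M.jump n ω, hn, M.pos_J n ω⟩, rfl⟩

noncomputable def avoidsInd (A : Set M.X) (n : ℕ) : (Fin (n + 1) → M.X) → ℝ≥0∞ :=
  (univ.pi fun _ => Aᶜ).indicator 1

theorem avoidsInd_path (A : Set M.X) (n : ℕ) (ω : M.Ω) :
    M.avoidsInd A n (M.path n ω) = if ∀ k ≤ n, M.jump k ω ∉ A then 1 else 0 := by
  simp only [avoidsInd, indicator_apply, mem_univ_pi, mem_compl_iff, Pi.one_apply, path]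
  congr 1
  exact propext ⟨fun h k hk => h ⟨k, by omega⟩, fun h k => h k (by omega)⟩

theorem avoidsInd_path_succ (A : Set M.X) (n : ℕ) (ω : M.Ω) :
    M.avoidsInd A (n + 1) (M.path (n + 1) ω)
      = M.avoidsInd A n (M.path n ω) * Aᶜ.indicator 1 (M.jump (n + 1) ω) := by
  simp only [avoidsInd, indicator_apply, mem_univ_pi, Fin.forall_fin_succ' (n := n + 1)]
  split_ifs <;> simp_all [path]

/-- By `lintegral_path_mul_hold`, the expected `n`-th holding time on the event that `A` is not
visited up to step `n`. -/
noncomputable def meanHoldBefore (A : Set M.X) (x : M.X) (n : ℕ) : ℝ≥0∞ :=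
  ∫⁻ ω, M.avoidsInd A n (M.path n ω) * (ENNReal.ofReal (M.γ (M.jump n ω)))⁻¹ ∂M.μ x

theorem lintegral_tau_le_tsum_meanHoldBefore (A : Set M.X) (x : M.X)
    (hhit : ∀ᵐ ω ∂M.μ x, ∃ n, M.jump n ω ∈ A) :
    ∫⁻ ω, M.tau A ω ∂M.μ x ≤ ∑' n, M.meanHoldBefore A x n := by
  calc ∫⁻ ω, M.tau A ω ∂M.μ x
      ≤ ∫⁻ ω, ∑' n, M.avoidsInd A n (M.path n ω) * ENNReal.ofReal (M.hold n ω) ∂M.μ x := by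
        refine lintegral_mono_ae (hhit.mono fun ω hω => ?_)
        refine (M.tau_le_J A (Nat.find_spec hω)).trans ?_
        rw [J, ENNReal.ofReal_sum_of_nonneg fun k _ => (M.hold_pos k ω).le]
        refine le_trans (le_of_eq (Finset.sum_congr rfl fun k hk => ?_)) (ENNReal.sum_le_tsum _)
        rw [M.avoidsInd_path,
          if_pos fun j hj => Nat.find_min hω (hj.trans_lt (Finset.mem_range.1 hk)), one_mul]
    _ = ∑' n, ∫⁻ ω, M.avoidsInd A n (M.path n ω) * ENNReal.ofReal (M.hold n ω) ∂M.μ x :=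
        lintegral_tsum fun n => ((Measurable.of_discrete.comp (M.measurable_path n)).mul
          (M.hold_meas n).ennreal_ofReal).aemeasurable
    _ = ∑' n, M.meanHoldBefore A x n := tsum_congr fun n => M.lintegral_path_mul_hold x n _

theorem ae_exists_jump_mem (A : Set M.X) (x : M.X)
    (hx : M.μ x {ω | ∃ n, 1 ≤ n ∧ M.jump n ω = x} = 1)
    (hfin : ∑' n, M.meanHoldBefore A x n ≠ ⊤) :
    ∀ᵐ ω ∂M.μ x, ∃ n, M.jump n ω ∈ A := by
  set S : ℕ → Set M.Ω := fun n => {ω | M.jump n ω = x} ∩ ⋂ k, M.jump k ⁻¹' Aᶜ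
  have hS : ∀ n, M.μ x (S n) ≤ ENNReal.ofReal (M.γ x) * M.meanHoldBefore A x n := by
    intro n
    have hγ : ENNReal.ofReal (M.γ x) ≠ 0 := by simpa using M.γ_pos x
    have hSmeas : MeasurableSet (S n) := (M.jump_meas n x).inter
      (MeasurableSet.iInter fun k => M.measurable_jump k (MeasurableSet.of_discrete))
    rw [← ENNReal.inv_mul_le_iff hγ ENNReal.ofReal_ne_top, meanHoldBefore,
      ← lintegral_indicator_const hSmeas]
    refine lintegral_mono fun ω => ?_
    by_cases hω : ω ∈ S n
    · have hout : ∀ k, M.jump k ω ∉ A := fun k => mem_iInter.1 hω.2 k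
      rw [indicator_of_mem hω, M.avoidsInd_path, if_pos fun k _ => hout k, one_mul,
        show M.jump n ω = x from hω.1]
    · rw [indicator_of_notMem hω]
      exact zero_le
  have hsum : ∑' n, M.μ x (S n) ≠ ⊤ :=
    ne_top_of_le_ne_top (ENNReal.mul_ne_top ENNReal.ofReal_ne_top hfin)
      ((ENNReal.tsum_le_tsum hS).trans_eq ENNReal.tsum_mul_left)
  filter_upwards [ae_eventually_notMem hsum, M.ae_frequently_jump_eq x hx] with ω hnot hfreq
  by_contra! hnever
  obtain ⟨n, hn, hnS⟩ := (hfreq.and_eventually hnot).exists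
  exact hnS ⟨hn, mem_iInter.2 hnever⟩

section FosterLyapunov

variable {A : Set M.X} {h : M.X → ℝ≥0∞}

theorem lintegral_avoidsInd_succ_add_le
    (hsuper : ∀ z ∉ A, M.transOp h z + (ENNReal.ofReal (M.γ z))⁻¹ ≤ h z) (x : M.X) (n : ℕ) :
    ∫⁻ ω, M.avoidsInd A (n + 1) (M.path (n + 1) ω) * h (M.jump (n + 1) ω) ∂M.μ x
        + M.meanHoldBefore A x n
      ≤ ∫⁻ ω, M.avoidsInd A n (M.path n ω) * h (M.jump n ω) ∂M.μ x := by
  have hstep : ∫⁻ ω, M.avoidsInd A (n + 1) (M.path (n + 1) ω) * h (M.jump (n + 1) ω) ∂M.μ x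
      = ∫⁻ ω, M.avoidsInd A n (M.path n ω) * M.transOp (Aᶜ.indicator h) (M.jump n ω) ∂M.μ x := by
    rw [← M.lintegral_path_mul_jump_succ]
    refine lintegral_congr fun ω => ?_
    rw [avoidsInd_path_succ, mul_assoc]
    by_cases hA : M.jump (n + 1) ω ∈ A <;> simp [hA]
  rw [hstep, meanHoldBefore]
  refine (le_lintegral_add _ _).trans (lintegral_mono fun ω => ?_)
  rw [← mul_add, M.avoidsInd_path]
  split_ifs with hout
  · rw [one_mul, one_mul]
    exact (add_le_add (M.transOp_mono (indicator_le_self _ _) _) le_rfl).trans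
      (hsuper _ (hout n le_rfl))
  · simp

theorem tsum_meanHoldBefore_le
    (hsuper : ∀ z ∉ A, M.transOp h z + (ENNReal.ofReal (M.γ z))⁻¹ ≤ h z) (x : M.X) :
    ∑' n, M.meanHoldBefore A x n ≤ h x := by
  set u : ℕ → ℝ≥0∞ := fun n => ∫⁻ ω, M.avoidsInd A n (M.path n ω) * h (M.jump n ω) ∂M.μ x
  have htelescope : ∀ m, ∑ n ∈ Finset.range m, M.meanHoldBefore A x n + u m ≤ u 0 := by
    intro m
    induction m with
    | zero => simp
    | succ m ih =>
      calc ∑ n ∈ Finset.range (m + 1), M.meanHoldBefore A x n + u (m + 1)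
          = ∑ n ∈ Finset.range m, M.meanHoldBefore A x n
              + (u (m + 1) + M.meanHoldBefore A x m) := by
            rw [Finset.sum_range_succ]; ring
        _ ≤ ∑ n ∈ Finset.range m, M.meanHoldBefore A x n + u m := by
            gcongr; exact M.lintegral_avoidsInd_succ_add_le hsuper x m
        _ ≤ u 0 := ih
  have hu0 : u 0 ≤ h x :=
    calc u 0 ≤ ∫⁻ ω, h (M.jump 0 ω) ∂M.μ x := lintegral_mono fun ω => by
          rw [M.avoidsInd_path]; split_ifs <;> simp
      _ = h x := by
          rw [lintegral_congr_ae ((M.ae_jump_zero x).mono fun ω hω => by rw [hω]),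
            lintegral_const, measure_univ, mul_one]
  exact ENNReal.tsum_le_of_sum_range_le fun m => (le_self_add.trans (htelescope m)).trans hu0

theorem lintegral_tau_le
    (hsuper : ∀ z ∉ A, M.transOp h z + (ENNReal.ofReal (M.γ z))⁻¹ ≤ h z) (x : M.X)
    (hx : M.μ x {ω | ∃ n, 1 ≤ n ∧ M.jump n ω = x} = 1) (hhx : h x ≠ ⊤) :
    ∫⁻ ω, M.tau A ω ∂M.μ x ≤ h x := by
  have hsum := M.tsum_meanHoldBefore_le hsuper x
  exact (M.lintegral_tau_le_tsum_meanHoldBefore A x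
    (M.ae_exists_jump_mem A x hx (ne_top_of_le_ne_top hhx hsum))).trans hsum

end FosterLyapunov

theorem transOp_invPrimitive_comp_add_le {f : M.X → ℝ} (hf : M.InDomPos f) {g : ℝ → ℝ} {b : ℝ}
    (hg : MonotoneOn g (Icc 0 b)) (hfb : ∀ y, f y ≤ b) {z : M.X} (hgz : 0 < g (f z))
    (hdrift : M.gen f z ≤ -g (f z)) :
    M.transOp (fun y => invPrimitive g (f y)) z + (ENNReal.ofReal (M.γ z))⁻¹
      ≤ invPrimitive g (f z) := by
  set c := g (f z)
  set H : M.X → ℝ≥0∞ := fun y => invPrimitive g (f y)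
  set m := ∑' y, M.P z y * f y
  have hγ := M.γ_pos z
  have hmem : ∀ y, f y ∈ Icc 0 b := fun y => ⟨hf.1 y, hfb y⟩
  have hm : m / c + (M.γ z)⁻¹ ≤ f z / c := by
    have hm' : m ≤ f z - c / M.γ z := by
      rw [show m = _ from M.tsum_P_mul f z]
      have := div_le_div_of_nonneg_right hdrift hγ.le
      rw [neg_div] at this
      linarith
    calc m / c + (M.γ z)⁻¹ ≤ (f z - c / M.γ z) / c + (M.γ z)⁻¹ := by gcongr
      _ = f z / c := by field_simp; ring
  have hmean : M.transOp (fun y => ENNReal.ofReal (f y / c)) z = ENNReal.ofReal (m / c) := by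
    simp_rw [transOp, ← ENNReal.ofReal_mul (M.P_nonneg z _), ← mul_div_assoc]
    rw [← ENNReal.ofReal_tsum_of_nonneg
      (fun y => div_nonneg (mul_nonneg (M.P_nonneg z y) (hf.1 y)) hgz.le)
      ((M.summable_P_mul hf.2 z).div_const c), tsum_div_const]
  have htangent : M.transOp H z + ENNReal.ofReal (f z / c) ≤ H z + ENNReal.ofReal (m / c) := by
    rw [← transOp_add_const, ← hmean, ← transOp_const_add]
    exact M.transOp_mono (fun y => invPrimitive_add_le hg (hmem z) (hmem y) hgz) z
  rw [← ENNReal.add_le_add_iff_right (ENNReal.ofReal_ne_top (r := f z / c))]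
  calc M.transOp H z + (ENNReal.ofReal (M.γ z))⁻¹ + ENNReal.ofReal (f z / c)
      = M.transOp H z + ENNReal.ofReal (f z / c) + ENNReal.ofReal (M.γ z)⁻¹ := by
        rw [ENNReal.ofReal_inv_of_pos hγ, add_right_comm]
    _ ≤ H z + (ENNReal.ofReal (m / c) + ENNReal.ofReal (M.γ z)⁻¹) := by
        rw [← add_assoc]
        gcongr
    _ ≤ H z + ENNReal.ofReal (f z / c) := by
        rw [← ENNReal.ofReal_add (div_nonneg (tsum_nonneg fun y =>
          mul_nonneg (M.P_nonneg z y) (hf.1 y)) hgz.le) (inv_nonneg.2 hγ.le)]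
        gcongr

end CTMC

open CTMC in
theorem statement9_general (M : CTMC) (hrec : M.JumpRecurrent)
    (f : M.X → ℝ) (hf : M.InDomPos f)
    (hbdd : BddAbove (Set.range f)) (b : ℝ) (hb : b = ⨆ x, f x)
    (g : ℝ → ℝ)
    (hgmono : MonotoneOn g (Set.Icc (0:ℝ) b))
    (B : ℝ≥0∞) (hB : B = ∫⁻ y in Set.Ioc (0:ℝ) b, (ENNReal.ofReal (g y))⁻¹)
    (hBfin : B < ⊤)
    (a : ℝ) (ha : 0 < a) (hab : a < b)
    (hdrift : ∀ x : M.X, a < f x → M.gen f x ≤ -g (f x)) :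
    ∀ x : M.X, a < f x → ∫⁻ ω, M.tau {y | f y ≤ a} ω ∂ M.μ x ≤ B := by
  intro x _
  have hfb : ∀ y, f y ≤ b := fun y => hb ▸ le_ciSup hbdd y
  have hB' : B = invPrimitive g b := hB
  have hhB : ∀ y, invPrimitive g (f y) ≤ B := fun y =>
    hB' ▸ lintegral_mono_set (Ioc_subset_Ioc_right (hfb y))
  have hga : 0 < g a := pos_of_invPrimitive_ne_top hgmono ha hab.le (hB' ▸ hBfin.ne)
  have hsuper : ∀ z ∉ {y | f y ≤ a}, M.transOp (fun y => invPrimitive g (f y)) z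
      + (ENNReal.ofReal (M.γ z))⁻¹ ≤ invPrimitive g (f z) := fun z hz => by
    have hz : a < f z := lt_of_not_ge hz
    exact M.transOp_invPrimitive_comp_add_le hf hgmono hfb
      (hga.trans_le (hgmono ⟨ha.le, hab.le⟩ ⟨hf.1 z, hfb z⟩ hz.le)) (hdrift z hz)
  exact (M.lintegral_tau_le hsuper x (hrec x) ((hhB x).trans_lt hBfin).ne).trans (hhB x)

open CTMC in
/-- Proposition (implosion via a modulated drift condition): if `f` is
strictly positive and bounded with finite sublevels below `b = sup f`, `g`
is increasing on `[0,b]` with `B = ∫_0^b dy/g(y) < ∞`, and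
`Γ f(x) ≤ -g(f(x))` outside `{f ≤ a}`, then `E_x τ_{{f ≤ a}} ≤ B` for all
`x ∉ {f ≤ a}`, i.e. the chain implodes towards `{f ≤ a}`. -/
theorem statement9 (M : CTMC) (hrec : M.JumpRecurrent)
    (f : M.X → ℝ) (hf : M.InDomPos f) (hfpos : ∀ x, 0 < f x)
    (hbdd : BddAbove (Set.range f)) (b : ℝ) (hb : b = ⨆ x, f x)
    (hsub : ∀ a' : ℝ, 0 < a' → a' < b → {x : M.X | f x ≤ a'}.Finite)
    (g : ℝ → ℝ) (hgnn : ∀ y ∈ Set.Icc (0:ℝ) b, 0 ≤ g y)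
    (hgmono : MonotoneOn g (Set.Icc (0:ℝ) b))
    (B : ℝ≥0∞) (hB : B = ∫⁻ y in Set.Ioc (0:ℝ) b, (ENNReal.ofReal (g y))⁻¹)
    (hBfin : B < ⊤)
    (a : ℝ) (ha : 0 < a) (hab : a < b)
    (hdrift : ∀ x : M.X, a < f x → M.gen f x ≤ -g (f x)) :
    ∀ x : M.X, a < f x → ∫⁻ ω, M.tau {y | f y ≤ a} ω ∂ M.μ x ≤ B :=
  statement9_general M hrec f hf hbdd b hb g hgmono B hB hBfin a ha hab hdrift
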